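/- Let R → S be a semicontent algebra such that R_p is a fidel (A)-ring for every prime p of R. Then R → S is residually McCoy, i.e., R/I → S/IS is McCoy for every ideal I of R. -/

import Mathlib

/-- The Ohm-Rush content of `f ∈ S`: the intersection of all ideals `I` of `R`
with `f ∈ IS`. -/
def orContent (R : Type*) [CommRing R] {S : Type*} [CommRing S] [Algebra R S] (f : S) :
    Ideal R :=
  sInf {I : Ideal R | f ∈ I.map (algebraMap R S)}

/-- `S` is an Ohm-Rush `R`-algebra if each `f ∈ S` lies in `c(f)S`,
i.e. there is a minimal ideal `I` with `f ∈ IS`. -/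
def IsOhmRush (R S : Type*) [CommRing R] [CommRing S] [Algebra R S] : Prop :=
  ∀ f : S, f ∈ (orContent R f).map (algebraMap R S)

/-- `S` is a McCoy `R`-algebra if whenever `f * g = 0` with `g ≠ 0`,
some nonzero `r ∈ R` annihilates the content of `f`. -/
def IsMcCoy (R S : Type*) [CommRing R] [CommRing S] [Algebra R S] : Prop :=
  ∀ f g : S, f * g = 0 → g ≠ 0 → ∃ r : R, r ≠ 0 ∧ ∀ a ∈ orContent R f, r * a = 0

/-- `S` is a weak content `R`-algebra: Ohm-Rush and `rad c(fg) = rad (c(f)c(g))`. -/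
def IsWeakContent (R S : Type*) [CommRing R] [CommRing S] [Algebra R S] : Prop :=
  IsOhmRush R S ∧ ∀ f g : S,
    (orContent R (f * g)).radical = (orContent R f * orContent R g).radical

/-- Property (A): every finitely generated ideal consisting of zero-divisors
has a nonzero annihilator. -/
def HasPropertyA (R : Type*) [CommRing R] : Prop :=
  ∀ J : Ideal R, J.FG → (∀ a ∈ J, a ∉ nonZeroDivisors R) →
    ∃ r : R, r ≠ 0 ∧ ∀ a ∈ J, a * r = 0

/-- Fidel (A): every quotient has property (A). -/
def HasFidelA (R : Type*) [CommRing R] : Prop :=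
  ∀ I : Ideal R, HasPropertyA (R ⧸ I)

/-- `S` is a semicontent `R`-algebra: faithfully flat, Ohm-Rush, and for every
multiplicative set `W ⊆ R` meeting `c(f)`, `c(fg)` and `c(g)` agree after
localizing at `W`. -/
def IsSemicontent (R S : Type*) [CommRing R] [CommRing S] [Algebra R S] : Prop :=
  Module.FaithfullyFlat R S ∧ IsOhmRush R S ∧
    ∀ (W : Submonoid R) (f g : S), (∃ w ∈ W, w ∈ orContent R f) →
      (orContent R (f * g)).map (algebraMap R (Localization W)) =
        (orContent R g).map (algebraMap R (Localization W))

/-! The McCoy property is checked locally. If `f * g = 0` and no nonzero element of `R` kills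
`c(f)`, then `c(g)` vanishes at every maximal ideal `P`, so `c(g) = 0` and `g = 0`. At `P`, either
`c(f)_P` consists of zero-divisors, and property (A) of `R_P` gives a nonzero annihilator of the
finitely generated ideal `c(f)_P` which, after clearing denominators, annihilates `c(f)` in `R`;
or some `a ∈ c(f)` is a nonzero-divisor of `R_P`, and localizing at the preimage `W` of the
nonzero-divisors of `R_P` the semicontent condition gives `c(g)_W = c(fg)_W = 0`, so `c(g)_P = 0`.
The hypotheses pass to `R/I → S/IS`, because localizations of `R/I` at primes are quotients of
localizations of `R`. -/
def ContentCancelsLocally (R S : Type*) [CommRing R] [CommRing S] [Algebra R S] : Prop :=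
  ∀ (W : Submonoid R) (f g : S), (∃ w ∈ W, w ∈ orContent R f) →
    (orContent R (f * g)).map (algebraMap R (Localization W)) =
      (orContent R g).map (algebraMap R (Localization W))

section Content

variable {R S : Type*} [CommRing R] [CommRing S] [Algebra R S]

theorem orContent_zero : orContent R (0 : S) = ⊥ :=
  eq_bot_iff.mpr (sInf_le (by simp))

theorem orContent_le_iff (hOR : IsOhmRush R S) {f : S} {J : Ideal R} :
    orContent R f ≤ J ↔ f ∈ J.map (algebraMap R S) :=
  ⟨fun h => Ideal.map_mono h (hOR f), fun h => sInf_le h⟩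

theorem eq_zero_of_orContent_eq_bot (hOR : IsOhmRush R S) {f : S} (h : orContent R f = ⊥) :
    f = 0 := by
  simpa [h] using hOR f

theorem orContent_fg (hOR : IsOhmRush R S) (f : S) : (orContent R f).FG := by
  obtain ⟨T, hT, hfT⟩ := Submodule.mem_span_finite_of_mem_span (hOR f)
  obtain ⟨t, htc, htfin, hft⟩ := Set.exists_subset_image_finite_and
    (p := fun t => f ∈ Ideal.span t) |>.mp ⟨_, hT, T.finite_toSet, hfT⟩
  rw [← Ideal.map_span] at hft
  exact ⟨htfin.toFinset, by
    rw [Set.Finite.coe_toFinset]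
    exact le_antisymm (Ideal.span_le.mpr htc) ((orContent_le_iff hOR).mpr hft)⟩

end Content

section Quotient

variable {R S : Type*} [CommRing R] [CommRing S] [Algebra R S] (I : Ideal R)

local notation "IS" => I.map (algebraMap R S)

theorem mk_mem_map_quotient_iff {f : S} {J : Ideal (R ⧸ I)} :
    Ideal.Quotient.mk IS f ∈ J.map (algebraMap (R ⧸ I) (S ⧸ IS)) ↔
      f ∈ (J.comap (Ideal.Quotient.mk I)).map (algebraMap R S) := by
  have hI : I ≤ J.comap (Ideal.Quotient.mk I) := fun a ha => by
    simp [Ideal.Quotient.eq_zero_iff_mem.mpr ha]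
  have hcomm : (algebraMap (R ⧸ I) (S ⧸ IS)).comp (Ideal.Quotient.mk I) =
      (Ideal.Quotient.mk IS).comp (algebraMap R S) := rfl
  conv_lhs => rw [← Ideal.map_comap_of_surjective _ Ideal.Quotient.mk_surjective J,
    Ideal.map_map, hcomm, ← Ideal.map_map]
  rw [← Ideal.mem_comap, Ideal.comap_map_of_surjective _ Ideal.Quotient.mk_surjective,
    ← RingHom.ker_eq_comap_bot, Ideal.mk_ker, ← Ideal.map_sup, sup_eq_left.mpr hI]

theorem orContent_quotient (hOR : IsOhmRush R S) (f : S) :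
    orContent (R ⧸ I) (Ideal.Quotient.mk IS f) = (orContent R f).map (Ideal.Quotient.mk I) :=
  le_antisymm
    (sInf_le ((mk_mem_map_quotient_iff I).mpr ((orContent_le_iff hOR).mp Ideal.le_comap_map)))
    (le_sInf fun _ hJ => Ideal.map_le_iff_le_comap.mpr
      ((orContent_le_iff hOR).mpr ((mk_mem_map_quotient_iff I).mp hJ)))

theorem isOhmRush_quotient (hOR : IsOhmRush R S) : IsOhmRush (R ⧸ I) (S ⧸ IS) := by
  intro f
  obtain ⟨f, rfl⟩ := Ideal.Quotient.mk_surjective f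
  rw [orContent_quotient I hOR, mk_mem_map_quotient_iff]
  exact Ideal.map_mono Ideal.le_comap_map (hOR f)

theorem contentCancelsLocally_quotient (hOR : IsOhmRush R S) (hW : ContentCancelsLocally R S) :
    ContentCancelsLocally (R ⧸ I) (S ⧸ IS) := by
  intro W f g ⟨w, hwW, hwf⟩
  obtain ⟨f, rfl⟩ := Ideal.Quotient.mk_surjective f
  obtain ⟨g, rfl⟩ := Ideal.Quotient.mk_surjective g
  rw [orContent_quotient I hOR] at hwf
  obtain ⟨a, haf, rfl⟩ :=
    (Ideal.mem_map_iff_of_surjective _ Ideal.Quotient.mk_surjective).mp hwf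
  let φ := IsLocalization.map (S := Localization (W.comap (Ideal.Quotient.mk I)))
    (T := W) (Localization W) (Ideal.Quotient.mk I) le_rfl
  have hφ (J : Ideal R) :
      (J.map (Ideal.Quotient.mk I)).map (algebraMap (R ⧸ I) (Localization W)) =
        (J.map (algebraMap R _)).map φ := by
    rw [Ideal.map_map, Ideal.map_map, IsLocalization.map_comp]
  rw [← map_mul, orContent_quotient I hOR, orContent_quotient I hOR, hφ, hφ,
    hW _ f g ⟨a, hwW, haf⟩]

end Quotient

theorem HasPropertyA.of_ringEquiv {A B : Type*} [CommRing A] [CommRing B] (e : A ≃+* B)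
    (h : HasPropertyA A) : HasPropertyA B := by
  intro J hJ hzd
  have hJ' : (J.comap e).FG := by
    simpa [Ideal.map_comap_of_equiv] using Ideal.FG.map hJ (e.symm : B →+* A)
  have hzd' : ∀ a ∈ J.comap e, a ∉ nonZeroDivisors A := fun a ha hnzd => hzd _ ha <| by
    rw [← MulEquivClass.map_nonZeroDivisors e]
    exact Submonoid.mem_map_of_mem _ hnzd
  obtain ⟨r, hr, hann⟩ := h _ hJ' hzd'
  refine ⟨e r, by simpa using hr, fun b hb => ?_⟩
  simpa using congrArg e (hann (e.symm b) (by rwa [Ideal.mem_comap, RingEquiv.apply_symm_apply]))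

theorem HasFidelA.hasPropertyA_of_surjective {A B : Type*} [CommRing A] [CommRing B]
    (h : HasFidelA A) {φ : A →+* B} (hφ : Function.Surjective φ) : HasPropertyA B :=
  (h _).of_ringEquiv (RingHom.quotientKerEquivOfSurjective hφ)

theorem hasPropertyA_localization_quotient {R : Type*} [CommRing R] (I : Ideal R)
    (hA : ∀ (p : Ideal R) (hp : p.IsPrime), haveI := hp; HasFidelA (Localization p.primeCompl))
    (P : Ideal (R ⧸ I)) [P.IsPrime] : HasPropertyA (Localization.AtPrime P) :=
  (hA _ inferInstance).hasPropertyA_of_surjective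
    (RingHom.surjective_localRingHom_of_surjective _ Ideal.Quotient.mk_surjective P)

theorem IsLocalization.exists_ne_zero_mul_eq_zero_of_fg {R : Type*} [CommRing R]
    (M : Submonoid R) {L : Type*} [CommRing L] [Algebra R L] [IsLocalization M L]
    {J : Ideal R} (hJ : J.FG) {ρ : L} (hρ : ρ ≠ 0)
    (hann : ∀ a ∈ J.map (algebraMap R L), a * ρ = 0) :
    ∃ r : R, r ≠ 0 ∧ ∀ a ∈ J, r * a = 0 := by
  obtain ⟨T, rfl⟩ := hJ
  obtain ⟨⟨x, u⟩, rfl⟩ := IsLocalization.mk'_surjective M ρ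
  have hT (t : T) : ∃ c : M, c * ((t : R) * x) = 0 := by
    rw [← IsLocalization.map_eq_zero_iff M L, map_mul, ← IsLocalization.mk'_spec L x u,
      ← mul_assoc, hann _ (Ideal.mem_map_of_mem _ (Ideal.subset_span t.2)), zero_mul]
  choose c hc using hT
  -- `r := (∏ c_t) * x` kills every generator `t`, and `r ≠ 0` since `ρ = x / u ≠ 0`.
  refine ⟨(∏ t, c t : M) * x, fun h0 => hρ ((IsLocalization.mk'_eq_zero_iff x u).mpr ⟨_, h0⟩),
    Submodule.mem_annihilator.mp ((Submodule.mem_annihilator_span _ _).mpr fun t => ?_)⟩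
  obtain ⟨d, hd⟩ := Finset.dvd_prod_of_mem (fun t => (c t : R)) (Finset.mem_univ t)
  simp only [Submonoid.coe_finsetProd, smul_eq_mul, hd]
  linear_combination (d : R) * hc t

section McCoyCriterion

variable {R S : Type*} [CommRing R] [CommRing S] [Algebra R S]

theorem algebraMap_eq_zero_of_mem_orContent (hW : ContentCancelsLocally R S) {f g : S}
    (hfg : f * g = 0) {L : Type*} [CommRing L] [Algebra R L] {a : R} (ha : a ∈ orContent R f)
    (haL : algebraMap R L a ∈ nonZeroDivisors L) {b : R} (hb : b ∈ orContent R g) :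
    algebraMap R L b = 0 := by
  set W := (nonZeroDivisors L).comap (algebraMap R L)
  have hg : (orContent R g).map (algebraMap R (Localization W)) = ⊥ := by
    rw [← hW W f g ⟨a, haL, ha⟩, hfg, orContent_zero, Ideal.map_bot]
  obtain ⟨m, hm⟩ := (IsLocalization.map_eq_zero_iff W (Localization W) b).mp
    ((Ideal.map_eq_bot_iff_le_ker _).mp hg hb)
  rw [← mul_left_mem_nonZeroDivisors_eq_zero_iff m.2, ← map_mul, hm, map_zero]

theorem exists_annihilator_or_map_orContent_eq_bot (hOR : IsOhmRush R S)
    (hW : ContentCancelsLocally R S) {f g : S} (hfg : f * g = 0) (M : Submonoid R)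
    {L : Type*} [CommRing L] [Algebra R L] [IsLocalization M L] (hL : HasPropertyA L) :
    (∃ r : R, r ≠ 0 ∧ ∀ a ∈ orContent R f, r * a = 0) ∨
      (orContent R g).map (algebraMap R L) = ⊥ := by
  by_cases hzd : ∀ x ∈ (orContent R f).map (algebraMap R L), x ∉ nonZeroDivisors L
  · obtain ⟨ρ, hρ, hann⟩ := hL _ (Ideal.FG.map (orContent_fg hOR f) _) hzd
    exact .inl (IsLocalization.exists_ne_zero_mul_eq_zero_of_fg M (orContent_fg hOR f) hρ hann)
  · push Not at hzd
    obtain ⟨x, hx, hxL⟩ := hzd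
    obtain ⟨⟨⟨a, ha⟩, u⟩, hau⟩ := (IsLocalization.mem_map_algebraMap_iff M L).mp hx
    have haL : algebraMap R L a ∈ nonZeroDivisors L :=
      hau ▸ mul_mem hxL (IsLocalization.map_units L u).mem_nonZeroDivisors
    exact .inr ((Ideal.map_eq_bot_iff_le_ker _).mpr fun b hb =>
      algebraMap_eq_zero_of_mem_orContent hW hfg ha haL hb)

theorem isMcCoy_of_hasPropertyA_localization (hOR : IsOhmRush R S)
    (hW : ContentCancelsLocally R S)
    (hA : ∀ (P : Ideal R) [P.IsMaximal], HasPropertyA (Localization.AtPrime P)) :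
    IsMcCoy R S := by
  intro f g hfg hg
  by_contra hf
  refine hg (eq_zero_of_orContent_eq_bot hOR (ideal_eq_bot_of_localization' _ fun P _ => ?_))
  exact (exists_annihilator_or_map_orContent_eq_bot hOR hW hfg P.primeCompl (hA P)).resolve_left
    hf

end McCoyCriterion

/-- If `R → S` is a semicontent algebra and `R_p` is a fidel (A)-ring for every
prime `p` of `R`, then `R → S` is residually McCoy: `R/I → S/IS` is McCoy for
every ideal `I` of `R`. -/
theorem stmt_10 (R S : Type*) [CommRing R] [CommRing S] [Algebra R S]
    (hsc : IsSemicontent R S)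
    (hA : ∀ (p : Ideal R) (hp : p.IsPrime),
      haveI := hp
      HasFidelA (Localization p.primeCompl)) :
    ∀ I : Ideal R, IsMcCoy (R ⧸ I) (S ⧸ I.map (algebraMap R S)) := by
  obtain ⟨-, hOR, hW⟩ := hsc
  intro I
  exact isMcCoy_of_hasPropertyA_localization (isOhmRush_quotient I hOR)
    (contentCancelsLocally_quotient I hOR hW) fun P _ => hasPropertyA_localization_quotient I hA P
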